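/- A mixed graph G whose skeleton is a tree is an MEC if and only if (1) G has no induced subgraph of the form a→b—c, and (2) for every directed edge u→v of G there exists a node w such that u→v is part of an induced subgraph of G of the form w→u→v or of the form u→v←w. -/

import Mathlib

/-! Common definitions: mixed graphs, Markov equivalence classes (MECs),
partial MECs, projections, extensions, and counting classes. -/

/-- A mixed graph on a vertex type `V`: an irreflexive edge relation. -/
structure MixedGraph (V : Type*) where
  E : V → V → Prop
  irrefl : ∀ v, ¬ E v v

namespace MixedGraph

variable {V : Type*}

/-- `u — v` : undirected edge of `M`. -/
def undirE (M : MixedGraph V) (u v : V) : Prop := M.E u v ∧ M.E v u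

/-- `u → v` : directed edge of `M`. -/
def dirE (M : MixedGraph V) (u v : V) : Prop := M.E u v ∧ ¬ M.E v u

/-- `u` and `v` are adjacent in `M` (joined by some edge). -/
def adjE (M : MixedGraph V) (u v : V) : Prop := M.E u v ∨ M.E v u

/-- The skeleton of a mixed graph: replace every directed edge by an undirected one. -/
def skeleton (M : MixedGraph V) : SimpleGraph V where
  Adj u v := M.adjE u v
  symm := by
    refine ⟨?_⟩
    intro u v h
    exact Or.symm h
  loopless := by
    refine ⟨?_⟩
    intro v h
    rcases h with h | h <;> exact M.irrefl v h

/-- The undirected part of a mixed graph, as a simple graph. -/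
def undirGraph (M : MixedGraph V) : SimpleGraph V where
  Adj u v := M.undirE u v
  symm := by
    refine ⟨?_⟩
    intro u v h
    exact ⟨h.2, h.1⟩
  loopless := by
    refine ⟨?_⟩
    intro v h
    exact M.irrefl v h.1

/-- `M` is a chain graph: no directed cycle, i.e. no cycle
`u_1, …, u_l, u_1` (`l ≥ 2`, vertices distinct) in which every consecutive pair is joined
by an undirected or forward-directed edge and at least one edge is directed. -/
def IsChainGraph (M : MixedGraph V) : Prop :=
  ∀ (l : ℕ) (f : ZMod l → V), 2 ≤ l → Function.Injective f →
    (∀ i, M.E (f i) (f (i + 1))) → ∀ i, ¬ M.dirE (f i) (f (i + 1))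

/-- `a → b ← c` is a v-structure of `M` (in particular `a`, `c` non-adjacent). -/
def vstruct (M : MixedGraph V) (a b c : V) : Prop :=
  M.dirE a b ∧ M.dirE c b ∧ ¬ M.adjE a c

/-- The set of v-structures of `M`, as ordered triples `(a, b, c)` with `a → b ← c`. -/
def vstructs (M : MixedGraph V) : Set (V × V × V) :=
  {t | M.vstruct t.1 t.2.1 t.2.2}

/-- The directed edge `u → v` is strongly protected in `M`: it occurs in an induced
subgraph of one of the four forms (a) `w→u→v` (`w`,`v` non-adjacent);
(b) `u→v←w` (`u`,`w` non-adjacent); (c) `u→w`, `w→v`, `u→v`;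
(d) `w→v`, `w'→v`, `w—u`, `w'—u`, `u→v` (`w`,`w'` non-adjacent). -/
def StronglyProtected (M : MixedGraph V) (u v : V) : Prop :=
  (∃ w, M.dirE w u ∧ ¬ M.adjE w v) ∨
  (∃ w, M.dirE w v ∧ ¬ M.adjE u w) ∨
  (∃ w, M.dirE u w ∧ M.dirE w v) ∨
  (∃ w w', w ≠ w' ∧ M.undirE w u ∧ M.undirE w' u ∧ M.dirE w v ∧ M.dirE w' v ∧
    ¬ M.adjE w w')

/-- The induced mixed subgraph of `M` on the vertex set `X`, kept on the same vertex
type (vertices outside `X` become isolated). -/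
def induce (M : MixedGraph V) (X : Set V) : MixedGraph V where
  E u v := u ∈ X ∧ v ∈ X ∧ M.E u v
  irrefl := by
    intro v h
    exact M.irrefl v h.2.2

end MixedGraph

namespace SimpleGraph

variable {V : Type*}

/-- A simple graph is chordal: every cycle of length at least `4` has a chord
(an edge between two non-consecutive vertices of the cycle). -/
def IsChordalGraph (G : SimpleGraph V) : Prop :=
  ∀ (l : ℕ) (f : ZMod l → V), 4 ≤ l → Function.Injective f →
    (∀ i, G.Adj (f i) (f (i + 1))) →
    ∃ i j : ZMod l, j ≠ i + 1 ∧ i ≠ j + 1 ∧ G.Adj (f i) (f j)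

/-- The induced subgraph of `G` on the vertex set `X`, kept on the same vertex type
(vertices outside `X` become isolated). -/
def inducedOn (G : SimpleGraph V) (X : Set V) : SimpleGraph V where
  Adj u v := u ∈ X ∧ v ∈ X ∧ G.Adj u v
  symm := by
    refine ⟨?_⟩
    intro u v h
    exact ⟨h.2.1, h.1, h.2.2.symm⟩
  loopless := by
    refine ⟨?_⟩
    intro v h
    exact G.loopless.irrefl v h.2.2

/-- The set of neighbours in `G` of vertices of `S`. -/
def nbhdSet (G : SimpleGraph V) (S : Set V) : Set V :=
  {v | ∃ u ∈ S, G.Adj u v}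

/-- View an undirected graph as a mixed graph all of whose edges are undirected. -/
def toMixed (G : SimpleGraph V) : MixedGraph V :=
  ⟨G.Adj, fun v h => G.loopless.irrefl v h⟩

end SimpleGraph

namespace MixedGraph

variable {V : Type*}

/-- `M` is (the graphical representation of) a Markov equivalence class, by the
Andersson–Madigan–Perlman characterization: (1) `M` is a chain graph; (2) every
undirected connected component of `M` is chordal; (3) `M` has no induced subgraph
`a→b—c`; (4) every directed edge of `M` is strongly protected. -/
def IsMEC (M : MixedGraph V) : Prop :=
  M.IsChainGraph ∧
  M.undirGraph.IsChordalGraph ∧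
  (∀ a b c, M.dirE a b → M.undirE b c → M.adjE a c) ∧
  (∀ u v, M.dirE u v → M.StronglyProtected u v)

/-- `M` is a partial MEC: conditions (1)–(3) of the MEC characterization. -/
def IsPartialMEC (M : MixedGraph V) : Prop :=
  M.IsChainGraph ∧
  M.undirGraph.IsChordalGraph ∧
  (∀ a b c, M.dirE a b → M.undirE b c → M.adjE a c)

end MixedGraph

/-- `MEC(G)` : the set of MECs with skeleton `G`. -/
def MECset {V : Type*} (G : SimpleGraph V) : Set (MixedGraph V) :=
  {M | M.IsMEC ∧ M.skeleton = G}

/-- `PMEC(G)` : the set of partial MECs with skeleton `G`. -/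
def PMECset {V : Type*} (G : SimpleGraph V) : Set (MixedGraph V) :=
  {M | M.IsPartialMEC ∧ M.skeleton = G}

/-- `M' = P(M, Y)` : `M'` is the projection of `M` on the vertex set `Y`, i.e. the
(unique) MEC of the induced subgraph on `Y` whose set of v-structures equals that
of `M[Y]`. -/
def IsProjection {V : Type*} (M : MixedGraph V) (Y : Set V) (M' : MixedGraph V) : Prop :=
  M' ∈ MECset (M.skeleton.inducedOn Y) ∧ M'.vstructs = (M.induce Y).vstructs

/-- `MEC(G, r, 1)` : MECs of `G` that contain a directed edge into `r`. -/
def MEC1 {V : Type*} (G : SimpleGraph V) (r : V) : Set (MixedGraph V) :=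
  {M ∈ MECset G | ∃ x, M.dirE x r}

/-- `MEC(G, r, 0, i)` : MECs of `G` with no directed edge into `r` and exactly `i`
undirected edges incident to `r`. -/
def MEC0 {V : Type*} (G : SimpleGraph V) (r : V) (i : ℕ) : Set (MixedGraph V) :=
  {M ∈ MECset G | (¬ ∃ x, M.dirE x r) ∧ {x | M.undirE r x}.ncard = i}

/-- The degree of `r` in `G`. -/
noncomputable def degS {V : Type*} (G : SimpleGraph V) (r : V) : ℕ :=
  {x | G.Adj r x}.ncard

/-- `n_1(G, r) = |MEC(G, r, 1)|`. -/
noncomputable def n1count {V : Type*} (G : SimpleGraph V) (r : V) : ℕ :=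
  (MEC1 G r).ncard

/-- `n_0^i(G, r) = |MEC(G, r, 0, i)|`. -/
noncomputable def n0count {V : Type*} (G : SimpleGraph V) (r : V) (i : ℕ) : ℕ :=
  (MEC0 G r i).ncard

/-- `n_0(G, r) = Σ_{i = 0}^{δ} n_0^i(G, r)`, where `δ` is the degree of `r` in `G`. -/
noncomputable def n0total {V : Type*} (G : SimpleGraph V) (r : V) : ℕ :=
  ∑ i ∈ Finset.range (degS G r + 1), n0count G r i

/-- The set of vertices lying on the `r1` side after cutting the edge `r1 — r2` of `G`
(i.e. the vertices reachable from `r1` in `G` with the edge `r1 — r2` deleted). -/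
def cutSide {V : Type*} (G : SimpleGraph V) (r1 r2 : V) : Set V :=
  {v | (G.deleteEdges {s(r1, r2)}).Reachable r1 v}

/-- `MEC(G, O)` : the MECs of `G` whose induced subgraph on `X` (the vertex set of
`O`) equals `O`. -/
def MECwith {V : Type*} (G : SimpleGraph V) (O : MixedGraph V) (X : Set V) :
    Set (MixedGraph V) :=
  {M ∈ MECset G | M.induce X = O}

/-- `O ∈ E(O1, O2)` : `O` is an extension of `(O1, O2)` (where `X1`, `X2` are the
vertex sets of `O1`, `O2`): for each `a ∈ {1,2}`, (i) every directed edge of `O_a` is a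
directed edge of `O`; (ii) `V(O_a) = V(O[V_{O_a}])`; (iii) every undirected edge of
`O_a` that is directed in `O` is strongly protected in `O`. -/
def IsExtension {V : Type*} (O O1 O2 : MixedGraph V) (X1 X2 : Set V) : Prop :=
  (∀ u v, O1.dirE u v → O.dirE u v) ∧
  (∀ u v, O2.dirE u v → O.dirE u v) ∧
  O1.vstructs = (O.induce X1).vstructs ∧
  O2.vstructs = (O.induce X2).vstructs ∧
  (∀ u v, O1.undirE u v → O.dirE u v → O.StronglyProtected u v) ∧
  (∀ u v, O2.undirE u v → O.dirE u v → O.StronglyProtected u v)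

/-- The v-structure (recorded as the ordered triple `t = (a, b, c)` with `a → b ← c`)
contains the directed edge `x → y`. -/
def vstructContains {V : Type*} (t : V × V × V) (x y : V) : Prop :=
  (t.1 = x ∧ t.2.1 = y) ∨ (t.2.2 = x ∧ t.2.1 = y)


/-! A tree skeleton has no cycles at all. Hence a directed cycle can only be a 2-cycle, which
the definition of a directed edge excludes; chordality of the undirected part is vacuous; and
the protection patterns (c) and (d) are impossible, since they contain a triangle and a 4-cycle
of the skeleton. Only the patterns (a) and (b) remain. -/

open Function

namespace SimpleGraph

variable {V : Type*} {G : SimpleGraph V}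

theorem IsAcyclic.false_of_injective_cycle (hG : G.IsAcyclic) {l : ℕ} (hl : 3 ≤ l)
    {f : ZMod l → V} (hf : Injective f) (hadj : ∀ i, G.Adj (f i) (f (i + 1))) : False := by
  obtain ⟨n, rfl⟩ : ∃ n, l = n + 3 := ⟨l - 3, by omega⟩
  let φ : cycleGraph (n + 3) →g G :=
    ⟨f, fun {u v} h => by
      rcases cycleGraph_adj.mp h with h | h
      · rw [sub_eq_iff_eq_add'.mp h]
        exact (hadj v).symm
      · rw [sub_eq_iff_eq_add'.mp h]
        exact hadj u⟩
  exact hG.comap φ hf _ cycleGraph.isCycle_cycle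

theorem IsAcyclic.not_adj_of_adj_of_adj (hG : G.IsAcyclic) {a b c : V} (hab : G.Adj a b)
    (hbc : G.Adj b c) : ¬ G.Adj a c := fun hac => by
  have hp : (Walk.cons hab (Walk.cons hbc Walk.nil)).IsPath := by
    simp [hab.ne, hbc.ne, hac.ne]
  exact hbc.ne (hG.eq_snd_of_adj_start hp hac (by simp)).symm

theorem IsAcyclic.common_neighbor_unique (hG : G.IsAcyclic) {a b c d : V} (hac : a ≠ c)
    (hab : G.Adj a b) (hbc : G.Adj b c) (had : G.Adj a d) (hdc : G.Adj d c) : b = d := by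
  have hp : (Walk.cons hab (Walk.cons hbc Walk.nil)).IsPath := by simp [hab.ne, hbc.ne, hac]
  have hq : (Walk.cons had (Walk.cons hdc Walk.nil)).IsPath := by simp [had.ne, hdc.ne, hac]
  have hpq : (⟨_, hp⟩ : G.Path a c) = ⟨_, hq⟩ := (hG.subsingleton_path a c).elim _ _
  simpa using congrArg (fun p : G.Path a c => p.1.snd) hpq

theorem IsAcyclic.isChordalGraph (hG : G.IsAcyclic) : G.IsChordalGraph :=
  fun _ _ hl hf hadj => (hG.false_of_injective_cycle (by omega) hf hadj).elim

end SimpleGraph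

namespace MixedGraph

variable {V : Type*} (M : MixedGraph V)

theorem skeleton_adj_of_E {u v : V} (h : M.E u v) : M.skeleton.Adj u v := Or.inl h

theorem undirGraph_le_skeleton : M.undirGraph ≤ M.skeleton := fun _ _ h => Or.inl h.1

variable {M}

theorem isChainGraph_of_isAcyclic (hM : M.skeleton.IsAcyclic) : M.IsChainGraph := by
  intro l f hl hf hE i hdir
  rcases hl.eq_or_lt with rfl | hl
  · have hback : ∀ j : ZMod 2, j + 1 + 1 = j := by decide
    exact hdir.2 (by simpa only [hback] using hE (i + 1))
  · exact hM.false_of_injective_cycle hl hf fun j => M.skeleton_adj_of_E (hE j)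

theorem stronglyProtected_iff_of_isAcyclic (hM : M.skeleton.IsAcyclic) {u v : V}
    (huv : M.skeleton.Adj u v) :
    M.StronglyProtected u v ↔
      ∃ w, (M.dirE w u ∧ ¬ M.adjE w v) ∨ (M.dirE w v ∧ ¬ M.adjE u w) := by
  refine ⟨fun h => ?_, fun ⟨w, h⟩ => h.imp (⟨w, ·⟩) (fun h => Or.inl ⟨w, h⟩)⟩
  rcases h with ⟨w, h⟩ | ⟨w, h⟩ | ⟨w, huw, hwv⟩ | ⟨w, w', hww', hwu, hw'u, hwv, hw'v, -⟩
  · exact ⟨w, Or.inl h⟩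
  · exact ⟨w, Or.inr h⟩
  · exact (hM.not_adj_of_adj_of_adj (M.skeleton_adj_of_E huw.1)
      (M.skeleton_adj_of_E hwv.1) huv).elim
  · exact (huv.ne (hM.common_neighbor_unique hww' (M.skeleton_adj_of_E hwu.1)
      (M.skeleton_adj_of_E hw'u.2) (M.skeleton_adj_of_E hwv.1)
      (M.skeleton_adj_of_E hw'v.1).symm)).elim

end MixedGraph

theorem tree_MEC_characterization_general {V : Type*}
    (M : MixedGraph V) (hT : M.skeleton.IsTree) :
    M.IsMEC ↔
      ((∀ a b c, M.dirE a b → M.undirE b c → M.adjE a c) ∧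
        ∀ u v, M.dirE u v → ∃ w,
          (M.dirE w u ∧ ¬ M.adjE w v) ∨ (M.dirE w v ∧ ¬ M.adjE u w)) := by
  have hM := hT.isAcyclic
  have hprot {u v} (huv : M.dirE u v) :=
    MixedGraph.stronglyProtected_iff_of_isAcyclic hM (M.skeleton_adj_of_E huv.1)
  constructor
  · rintro ⟨-, -, hab, hdir⟩
    exact ⟨hab, fun u v huv => (hprot huv).mp (hdir u v huv)⟩
  · rintro ⟨hab, hdir⟩
    exact ⟨MixedGraph.isChainGraph_of_isAcyclic hM,
      (hM.anti M.undirGraph_le_skeleton).isChordalGraph, hab,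
      fun u v huv => (hprot huv).mpr (hdir u v huv)⟩

theorem tree_MEC_characterization {V : Type*} [Fintype V] [DecidableEq V]
    (M : MixedGraph V) (hT : M.skeleton.IsTree) :
    M.IsMEC ↔
      ((∀ a b c, M.dirE a b → M.undirE b c → M.adjE a c) ∧
        ∀ u v, M.dirE u v → ∃ w,
          (M.dirE w u ∧ ¬ M.adjE w v) ∨ (M.dirE w v ∧ ¬ M.adjE u w)) :=
  tree_MEC_characterization_general M hT
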